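/- The Floyd–Warshall update rule computes reachability: if for each vertex c (in any fixed order) one replaces path(a,b) by path(a,b) ∨ (path(a,c) ∧ path(c,b)) for all a, b, then after processing all vertices, path(a,b) holds iff there is a directed path from a to b in the original graph. -/

import Mathlib

/-- The stages of the Floyd–Warshall algorithm: `floydWarshall edge k` is the
reachability relation after eliminating the first `k` vertices as intermediate
vertices. -/
def floydWarshall {n : ℕ} (edge : Fin n → Fin n → Prop) : ℕ → Fin n → Fin n → Prop
  | 0, a, b => edge a b
  | k + 1, a, b => floydWarshall edge k a b ∨
      ∃ c : Fin n, (c : ℕ) = k ∧ floydWarshall edge k a c ∧ floydWarshall edge k c b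

/-!
Let `TransGenVia r s a b` mean that `b` is reachable from `a` by a nonempty `r`-walk all of whose
interior vertices lie in `s`; then `floydWarshall edge k` is `TransGenVia edge {c | c < k}`.
The point is the identity
`TransGenVia r (insert c s) a b ↔ TransGenVia r s a b ∨ (TransGenVia r s a c ∧ TransGenVia r s c b)`,
whose hard direction holds because walks through `c` can be shortcut at `c`: a walk `c ⇝ c` never
needs to be used. For `k = n` the set of allowed interior vertices is everything.
-/

namespace Relation

variable {α : Type*} {r : α → α → Prop} {s t : Set α} {a b c : α}

inductive TransGenVia (r : α → α → Prop) (s : Set α) : α → α → Prop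
  | single {a b : α} : r a b → TransGenVia r s a b
  | trans {a c b : α} : TransGenVia r s a c → c ∈ s → TransGenVia r s c b → TransGenVia r s a b

namespace TransGenVia

theorem mono (hst : s ⊆ t) (h : TransGenVia r s a b) : TransGenVia r t a b := by
  induction h with
  | single hab => exact single hab
  | trans _ hc _ ihac ihcb => exact trans ihac (hst hc) ihcb

theorem toTransGen (h : TransGenVia r s a b) : TransGen r a b := by
  induction h with
  | single hab => exact TransGen.single hab
  | trans _ _ _ ihac ihcb => exact ihac.trans ihcb

theorem of_transGen (h : TransGen r a b) : TransGenVia r Set.univ a b := by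
  induction h with
  | single hab => exact single hab
  | tail _ hcb ih => exact trans ih (Set.mem_univ _) (single hcb)

theorem univ_iff_transGen : TransGenVia r Set.univ a b ↔ TransGen r a b :=
  ⟨toTransGen, of_transGen⟩

theorem empty_iff : TransGenVia r ∅ a b ↔ r a b := by
  refine ⟨fun h => ?_, single⟩
  cases h with
  | single hab => exact hab
  | trans _ hc _ => exact absurd hc (Set.notMem_empty _)

theorem insert_iff :
    TransGenVia r (insert c s) a b ↔
      TransGenVia r s a b ∨ (TransGenVia r s a c ∧ TransGenVia r s c b) := by
  constructor
  · intro h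
    induction h with
    | single hab => exact Or.inl (single hab)
    | @trans a d b _ hd _ ihad ihdb =>
      rcases hd with rfl | hd
      · have had : TransGenVia r s a d := ihad.elim id And.left
        have hdb : TransGenVia r s d b := ihdb.elim id And.right
        exact Or.inr ⟨had, hdb⟩
      · rcases ihad with had | ⟨hac, hcd⟩ <;> rcases ihdb with hdb | ⟨hdc, hcb⟩
        · exact Or.inl (trans had hd hdb)
        · exact Or.inr ⟨trans had hd hdc, hcb⟩
        · exact Or.inr ⟨hac, trans hcd hd hdb⟩
        · exact Or.inr ⟨hac, hcb⟩
  · rintro (h | ⟨hac, hcb⟩)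
    · exact h.mono (Set.subset_insert c s)
    · exact trans (hac.mono (Set.subset_insert c s)) (Set.mem_insert c s)
        (hcb.mono (Set.subset_insert c s))

end TransGenVia

end Relation

open Relation

theorem floydWarshall_iff_transGenVia {n : ℕ} (edge : Fin n → Fin n → Prop) {k : ℕ} (hk : k ≤ n)
    (a b : Fin n) :
    floydWarshall edge k a b ↔ TransGenVia edge {c | (c : ℕ) < k} a b := by
  induction k generalizing a b with
  | zero => simp [floydWarshall, TransGenVia.empty_iff]
  | succ k ih =>
    set c : Fin n := ⟨k, hk⟩
    have hs : {x : Fin n | (x : ℕ) < k + 1} = insert c {x : Fin n | (x : ℕ) < k} := by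
      ext x
      simp only [Set.mem_ofPred_eq, Set.mem_insert_iff, Fin.ext_iff, c]
      omega
    have hex : (∃ x : Fin n, (x : ℕ) = k ∧ floydWarshall edge k a x ∧ floydWarshall edge k x b) ↔
        floydWarshall edge k a c ∧ floydWarshall edge k c b :=
      ⟨fun ⟨x, hx, h⟩ => by rwa [show x = c from Fin.ext hx] at h, fun h => ⟨c, rfl, h⟩⟩
    have ih' := fun a b => ih (Nat.le_of_succ_le hk) a b
    rw [floydWarshall, hex, hs, TransGenVia.insert_iff, ih', ih', ih']

/-- The Floyd–Warshall update rule computes reachability: after processing all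
`n` vertices, `path(a,b)` holds iff there is a nonempty directed path from `a`
to `b` in the original graph, i.e. the transitive closure of the edge
relation. -/
theorem stmt_7 {n : ℕ} (edge : Fin n → Fin n → Prop) (a b : Fin n) :
    floydWarshall edge n a b ↔ Relation.TransGen edge a b := by
  have hall : {c : Fin n | (c : ℕ) < n} = Set.univ := Set.eq_univ_of_forall Fin.is_lt
  rw [floydWarshall_iff_transGenVia edge le_rfl, hall, TransGenVia.univ_iff_transGen]
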